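/- Let L be a positive integer and let D = ⋃_{a ∈ {0,1}ⁿ} T_a ⊆ ℝ^{2n−1}. Then (2n)^{2n−1} times the (2n−1)-dimensional Lebesgue volume of D ∩ {x ∈ ℝ^{2n−1} : L − 1/2 < x₁ < L + 1/2} equals the number of bit vectors a ∈ {0,1}ⁿ with ∑_{i=1}^{n} a_i s_i = L (equivalently, the number of subsets of the indices {1,…,n} whose corresponding integers s_i sum to L). -/

import Mathlib

/-!
Put `y_j = x_j - (x_{2j+1} + x_{2j+2})` at internal nodes and `y_j = x_j` at leaves. Then `T_a` is
the open cube of half-width `1/(4n)` around the leaf weights `w_a` in the coordinates `y`, and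
`x ↦ y` is unitriangular, so every `T_a` has volume `(2n)^{-(2n-1)}`. Summing `y` over all
`2n - 1` nodes telescopes to the root coordinate, so on `T_a` the root lies within
`(2n - 1)/(4n) < 1/2` of `∑ aᵢ sᵢ`: `T_a` lies inside the strip around `L` when that sum is `L`
and misses it otherwise. Distinct `a` give disjoint `T_a`, since at a leaf where they differ the
targets are `sᵢ ≥ 1` apart.
-/

open MeasureTheory
open scoped ENNReal

noncomputable section

/-- The value `a_{m−n+1} s_{m−n+1}` carried by a leaf of the heap-indexed binary tree
(0-based: index `j` is a leaf when `n − 1 ≤ j`, carrying `s_{j−(n−1)}`); the value is `0`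
on internal nodes. -/
def leafWeight (n : ℕ) (s : Fin n → ℕ) (a : Fin n → Bool) (j : Fin (2 * n - 1)) : ℝ :=
  if _ : n - 1 ≤ (j : ℕ) then
    (if a ⟨(j : ℕ) - (n - 1), by have := j.isLt; omega⟩ then
      (s ⟨(j : ℕ) - (n - 1), by have := j.isLt; omega⟩ : ℝ) else 0)
  else 0

/-- The tree region `T_a ⊆ ℝ^{2n−1}` : coordinates are indexed in heap order (0-based:
node `j` is internal when `j < n − 1`, with children `2j+1` and `2j+2`; the nodes
`n − 1 ≤ j` are leaves). A point `x` lies in `T_a` iff for every leaf `j`,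
`a_j s_j − 1/(4n) < x_j < a_j s_j + 1/(4n)`, and for every internal node `j`,
`x_{2j+1} + x_{2j+2} − 1/(4n) < x_j < x_{2j+1} + x_{2j+2} + 1/(4n)`. -/
def treeRegion (n : ℕ) (s : Fin n → ℕ) (a : Fin n → Bool) : Set (Fin (2 * n - 1) → ℝ) :=
  {x | (∀ j : Fin (2 * n - 1), n - 1 ≤ (j : ℕ) →
          (leafWeight n s a j - 1 / (4 * (n : ℝ)) < x j ∧
           x j < leafWeight n s a j + 1 / (4 * (n : ℝ)))) ∧
       (∀ j : Fin (2 * n - 1), ∀ h : (j : ℕ) < n - 1,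
          (x ⟨2 * (j : ℕ) + 1, by omega⟩ + x ⟨2 * (j : ℕ) + 2, by omega⟩ - 1 / (4 * (n : ℝ))
              < x j ∧
           x j < x ⟨2 * (j : ℕ) + 1, by omega⟩ + x ⟨2 * (j : ℕ) + 2, by omega⟩
              + 1 / (4 * (n : ℝ))))}


open Finset

theorem Matrix.det_one_sub_of_forall_le {m R : Type*} [Fintype m] [LinearOrder m] [CommRing R]
    (M : Matrix m m R) (hM : ∀ i j, j ≤ i → M i j = 0) : (1 - M).det = 1 := by
  rw [Matrix.det_of_isUpperTriangular]
  · exact prod_eq_one fun i _ => by simp [hM i i le_rfl]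
  · intro i j (hji : j < i)
    simp [Matrix.one_apply_ne hji.ne', hM i j hji.le]

theorem Finset.sum_range_two_mul_add_one {M : Type*} [AddCommMonoid M] (f : ℕ → M) (N : ℕ) :
    ∑ m ∈ range (2 * N + 1), f m = f 0 + ∑ j ∈ range N, (f (2 * j + 1) + f (2 * j + 2)) := by
  induction N with
  | zero => simp
  | succ N ih =>
    rw [show 2 * (N + 1) + 1 = 2 * N + 1 + 1 + 1 by ring, sum_range_succ _ (2 * N + 1 + 1),
      sum_range_succ _ (2 * N + 1), sum_range_succ _ N, ih, add_assoc, add_assoc]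

theorem Fin.sum_univ_two_mul_sub_one {M : Type*} [AddCommMonoid M] {n : ℕ} (hn : 1 ≤ n)
    (f : Fin (2 * n - 1) → M) :
    ∑ j, f j = ∑ j : Fin (n - 1), f ⟨j, by omega⟩ + ∑ i : Fin n, f ⟨n - 1 + i, by omega⟩ := by
  rw [← Fin.sum_congr' f (show n - 1 + n = 2 * n - 1 by omega), Fin.sum_univ_add]
  rfl

theorem volume_preimage_linearMap_sub {ι : Type*} [Fintype ι] {f : (ι → ℝ) →ₗ[ℝ] ι → ℝ}
    (hf : LinearMap.det f = 1) (c : ι → ℝ) (t : Set (ι → ℝ)) :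
    volume ((fun x => f x - c) ⁻¹' t) = volume t := by
  change volume (f ⁻¹' ((· + -c) ⁻¹' t)) = volume t
  rw [Measure.addHaar_preimage_linearMap _ (by simp [hf]), hf, inv_one, abs_one,
    ENNReal.ofReal_one, one_mul, measure_preimage_add_right]

theorem Nat.eq_of_abs_sub_lt_half {p q : ℕ} {y : ℝ} (hp : |y - p| < 1 / 2)
    (hq : |y - q| < 1 / 2) : p = q := by
  rw [abs_lt] at hp hq
  rcases lt_trichotomy p q with h | h | h
  · have : (p : ℝ) + 1 ≤ q := by exact_mod_cast h
    linarith
  · exact h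
  · have : (q : ℝ) + 1 ≤ p := by exact_mod_cast h
    linarith

variable {n : ℕ}

def heapChildSum (n : ℕ) : (Fin (2 * n - 1) → ℝ) →ₗ[ℝ] (Fin (2 * n - 1) → ℝ) :=
  LinearMap.pi fun j => if h : (j : ℕ) < n - 1 then
    LinearMap.proj ⟨2 * j + 1, by omega⟩ + LinearMap.proj ⟨2 * j + 2, by omega⟩ else 0

theorem heapChildSum_apply_of_lt (x : Fin (2 * n - 1) → ℝ) {j : Fin (2 * n - 1)}
    (h : (j : ℕ) < n - 1) :
    heapChildSum n x j = x ⟨2 * j + 1, by omega⟩ + x ⟨2 * j + 2, by omega⟩ := by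
  simp [heapChildSum, h]

theorem heapChildSum_apply_of_le (x : Fin (2 * n - 1) → ℝ) {j : Fin (2 * n - 1)}
    (h : n - 1 ≤ (j : ℕ)) : heapChildSum n x j = 0 := by
  simp [heapChildSum, h.not_gt]

theorem heapChildSum_single_apply_of_le {i j : Fin (2 * n - 1)} (hij : i ≤ j) :
    heapChildSum n (Pi.single i 1) j = 0 := by
  rcases lt_or_ge (j : ℕ) (n - 1) with h | h
  · rw [heapChildSum_apply_of_lt _ h, Pi.single_apply, Pi.single_apply,
      if_neg (by rw [Fin.ext_iff]; simp; omega), if_neg (by rw [Fin.ext_iff]; simp; omega),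
      add_zero]
  · exact heapChildSum_apply_of_le _ h

theorem det_id_sub_heapChildSum : LinearMap.det (LinearMap.id - heapChildSum n) = 1 := by
  rw [← LinearMap.det_toMatrix', map_sub, LinearMap.toMatrix'_id]
  exact Matrix.det_one_sub_of_forall_le _ fun i j hji => by
    rw [LinearMap.toMatrix'_apply, heapChildSum_single_apply_of_le hji]

-- Every node other than the root is the child of exactly one internal node.
theorem sum_sub_heapChildSum (hn : 1 ≤ n) (x : Fin (2 * n - 1) → ℝ) :
    ∑ j, (x j - heapChildSum n x j) = x ⟨0, by omega⟩ := by
  set y : ℕ → ℝ := fun m => if h : m < 2 * n - 1 then x ⟨m, h⟩ else 0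
  have hy (j : Fin (2 * n - 1)) : x j = y j := by simp [y]
  have hc (j : Fin (2 * n - 1)) :
      heapChildSum n x j = if (j : ℕ) < n - 1 then y (2 * j + 1) + y (2 * j + 2) else 0 := by
    split_ifs with h
    · rw [heapChildSum_apply_of_lt _ h, hy, hy]
    · exact heapChildSum_apply_of_le _ (not_lt.1 h)
  have hfilter : (range (2 * n - 1)).filter (· < n - 1) = range (n - 1) := by
    ext m
    simp only [mem_filter, mem_range]
    omega
  calc ∑ j, (x j - heapChildSum n x j)
      = ∑ m ∈ range (2 * n - 1),
          (y m - if m < n - 1 then y (2 * m + 1) + y (2 * m + 2) else 0) := by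
        rw [← Fin.sum_univ_eq_sum_range]
        simp only [← hy, hc]
    _ = ∑ m ∈ range (2 * (n - 1) + 1), y m -
          ∑ j ∈ range (n - 1), (y (2 * j + 1) + y (2 * j + 2)) := by
        rw [sum_sub_distrib, ← sum_filter, hfilter, show 2 * (n - 1) + 1 = 2 * n - 1 by omega]
    _ = x ⟨0, by omega⟩ := by rw [sum_range_two_mul_add_one, add_sub_cancel_right, hy]

theorem leafWeight_of_lt (s : Fin n → ℕ) (a : Fin n → Bool) {j : Fin (2 * n - 1)}
    (h : (j : ℕ) < n - 1) : leafWeight n s a j = 0 := by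
  simp [leafWeight, h.not_ge]

theorem leafWeight_leaf (s : Fin n → ℕ) (a : Fin n → Bool) (i : Fin n) :
    leafWeight n s a ⟨n - 1 + i, by omega⟩ = if a i then (s i : ℝ) else 0 := by
  simp [leafWeight]

theorem sum_leafWeight (hn : 1 ≤ n) (s : Fin n → ℕ) (a : Fin n → Bool) :
    ∑ j, leafWeight n s a j = ((∑ i, if a i then s i else 0 : ℕ) : ℝ) := by
  rw [Fin.sum_univ_two_mul_sub_one hn, sum_eq_zero fun j _ => leafWeight_of_lt s a j.isLt,
    zero_add]
  push_cast
  exact sum_congr rfl fun i _ => leafWeight_leaf s a i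

theorem mem_treeRegion_iff {s : Fin n → ℕ} {a : Fin n → Bool} {x : Fin (2 * n - 1) → ℝ} :
    x ∈ treeRegion n s a ↔
      ∀ j, |x j - heapChildSum n x j - leafWeight n s a j| < 1 / (4 * (n : ℝ)) := by
  simp only [treeRegion, Set.mem_ofPred_eq]
  constructor
  · rintro ⟨hleaf, hinternal⟩ j
    rcases lt_or_ge (j : ℕ) (n - 1) with h | h
    · have := hinternal j h
      rw [heapChildSum_apply_of_lt _ h, leafWeight_of_lt s a h, abs_lt]
      constructor <;> linarith
    · have := hleaf j h
      rw [heapChildSum_apply_of_le _ h, abs_lt]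
      constructor <;> linarith
  · intro hx
    refine ⟨fun j h => ?_, fun j h => ?_⟩
    · have := abs_lt.1 (hx j)
      rw [heapChildSum_apply_of_le _ h] at this
      constructor <;> linarith
    · have := abs_lt.1 (hx j)
      rw [heapChildSum_apply_of_lt _ h, leafWeight_of_lt s a h] at this
      constructor <;> linarith

theorem treeRegion_eq_preimage (s : Fin n → ℕ) (a : Fin n → Bool) :
    treeRegion n s a =
      (fun x => (LinearMap.id - heapChildSum n : (Fin (2 * n - 1) → ℝ) →ₗ[ℝ] _) x -
        leafWeight n s a) ⁻¹'
      Set.univ.pi fun _ => Set.Ioo (-(1 / (4 * (n : ℝ)))) (1 / (4 * (n : ℝ))) := by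
  ext x
  simp only [mem_treeRegion_iff, Set.mem_preimage, Set.mem_univ_pi, Set.mem_Ioo, abs_lt,
    Pi.sub_apply]
  rfl

theorem measurableSet_treeRegion (s : Fin n → ℕ) (a : Fin n → Bool) :
    MeasurableSet (treeRegion n s a) := by
  rw [treeRegion_eq_preimage]
  exact (MeasurableSet.univ_pi fun _ => measurableSet_Ioo).preimage
    ((LinearMap.continuous_of_finiteDimensional _).measurable.sub_const _)

theorem volume_treeRegion (hn : 1 ≤ n) (s : Fin n → ℕ) (a : Fin n → Bool) :
    volume (treeRegion n s a) = (2 * (n : ℝ≥0∞))⁻¹ ^ (2 * n - 1) := by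
  have hε : 1 / (4 * (n : ℝ)) - -(1 / (4 * (n : ℝ))) = ((2 * n : ℕ) : ℝ)⁻¹ := by
    have : (n : ℝ) ≠ 0 := by positivity
    push_cast
    field_simp
    ring
  rw [treeRegion_eq_preimage, volume_preimage_linearMap_sub det_id_sub_heapChildSum,
    Real.volume_pi_Ioo, prod_const, card_univ, Fintype.card_fin, hε,
    ENNReal.ofReal_inv_of_pos (by positivity), ENNReal.ofReal_natCast]
  push_cast
  rfl

theorem abs_sub_sum_leafWeight_lt_half (hn : 1 ≤ n) {s : Fin n → ℕ} {a : Fin n → Bool}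
    {x : Fin (2 * n - 1) → ℝ} (hx : x ∈ treeRegion n s a) :
    |x ⟨0, by omega⟩ - ((∑ i, if a i then s i else 0 : ℕ) : ℝ)| < 1 / 2 := by
  rw [← sum_sub_heapChildSum hn x, ← sum_leafWeight hn s a, ← sum_sub_distrib]
  have hn' : (1 : ℝ) ≤ n := by exact_mod_cast hn
  calc |∑ j, (x j - heapChildSum n x j - leafWeight n s a j)|
      ≤ ∑ j, |x j - heapChildSum n x j - leafWeight n s a j| := abs_sum_le_sum_abs _ _
    _ < ∑ _j : Fin (2 * n - 1), 1 / (4 * (n : ℝ)) :=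
        sum_lt_sum_of_nonempty ⟨⟨0, by omega⟩, mem_univ _⟩ fun j _ => mem_treeRegion_iff.1 hx j
    _ = (2 * n - 1) / (4 * n) := by
        rw [sum_const, card_univ, Fintype.card_fin, nsmul_eq_mul, Nat.cast_sub (by omega)]
        push_cast
        ring
    _ < 1 / 2 := by
        rw [div_lt_iff₀ (by positivity)]
        linarith

theorem disjoint_treeRegion {s : Fin n → ℕ} (hs : ∀ i, 0 < s i) {a b : Fin n → Bool}
    (hab : a ≠ b) : Disjoint (treeRegion n s a) (treeRegion n s b) := by
  obtain ⟨i, hi⟩ := Function.ne_iff.1 hab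
  have hn : (1 : ℝ) ≤ n := by exact_mod_cast i.pos
  have hsi : (1 : ℝ) ≤ s i := by exact_mod_cast hs i
  rw [Set.disjoint_left]
  intro x hxa hxb
  have hleaf : n - 1 ≤ n - 1 + (i : ℕ) := by omega
  have ha := abs_lt.1 (mem_treeRegion_iff.1 hxa ⟨n - 1 + i, by omega⟩)
  have hb := abs_lt.1 (mem_treeRegion_iff.1 hxb ⟨n - 1 + i, by omega⟩)
  rw [heapChildSum_apply_of_le _ hleaf, leafWeight_leaf] at ha hb
  have hε : 1 / (4 * (n : ℝ)) ≤ 1 / 4 := by gcongr; linarith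
  generalize a i = p at hi ha
  generalize b i = q at hi hb
  cases p <;> cases q <;>
    simp only [ne_eq, not_true_eq_false, Bool.false_eq_true, if_true, if_false] at hi ha hb <;>
    linarith [ha.1, ha.2, hb.1, hb.2]

theorem volume_treeRegion_inter_rootStrip (hn : 1 ≤ n) (s : Fin n → ℕ) (a : Fin n → Bool)
    (L : ℕ) :
    volume (treeRegion n s a ∩
        {x | (L : ℝ) - 1 / 2 < x ⟨0, by omega⟩ ∧ x ⟨0, by omega⟩ < (L : ℝ) + 1 / 2}) =
      if (∑ i, if a i then s i else 0) = L then (2 * (n : ℝ≥0∞))⁻¹ ^ (2 * n - 1) else 0 := by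
  split_ifs with hL
  · rw [Set.inter_eq_left.2, volume_treeRegion hn]
    intro x hx
    have := abs_lt.1 (abs_sub_sum_leafWeight_lt_half hn hx)
    rw [hL] at this
    exact ⟨by linarith, by linarith⟩
  · convert measure_empty (μ := volume)
    refine Set.eq_empty_of_forall_notMem fun x ⟨hx, hlo, hhi⟩ => hL ?_
    exact Nat.eq_of_abs_sub_lt_half (abs_sub_sum_leafWeight_lt_half hn hx)
      (abs_lt.2 ⟨by linarith, by linarith⟩)

/-- Theorem 2 reduction correctness: let `L` be a positive integer and
`D = ⋃_{a ∈ {0,1}ⁿ} T_a ⊆ ℝ^{2n−1}`. Then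
`(2n)^{2n−1} · volume (D ∩ {x : L − 1/2 < x₁ < L + 1/2})` equals the number of bit vectors
`a ∈ {0,1}ⁿ` with `∑ a_i s_i = L`. -/
theorem treeRegion_counts_subset_sums (k : ℕ) (n : ℕ) (hn : n = 2 ^ k)
    (s : Fin n → ℕ) (hs : ∀ i, 0 < s i) (L : ℕ) :
    let root : Fin (2 * n - 1) := ⟨0, by have := Nat.one_le_two_pow (n := k); omega⟩
    (2 * (n : ℝ≥0∞)) ^ (2 * n - 1) *
      volume ((⋃ a : Fin n → Bool, treeRegion n s a) ∩
        {x : Fin (2 * n - 1) → ℝ | (L : ℝ) - 1 / 2 < x root ∧ x root < (L : ℝ) + 1 / 2})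
    = ((Finset.univ.filter
        (fun a : Fin n → Bool => (∑ i : Fin n, if a i then s i else 0) = L)).card : ℝ≥0∞) := by
  intro root
  have hn_pos : 1 ≤ n := hn ▸ Nat.one_le_two_pow
  have hstrip : MeasurableSet
      {x : Fin (2 * n - 1) → ℝ | (L : ℝ) - 1 / 2 < x root ∧ x root < (L : ℝ) + 1 / 2} :=
    (measurableSet_lt measurable_const (measurable_pi_apply root)).inter
      (measurableSet_lt (measurable_pi_apply root) measurable_const)
  rw [Set.iUnion_inter, measure_iUnion
      (fun a b hab => (disjoint_treeRegion hs hab).mono Set.inter_subset_left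
        Set.inter_subset_left)
      (fun a => (measurableSet_treeRegion s a).inter hstrip),
    tsum_fintype, sum_congr rfl fun a _ => volume_treeRegion_inter_rootStrip hn_pos s a L,
    sum_ite, sum_const_zero, add_zero, sum_const, nsmul_eq_mul, mul_left_comm, ← mul_pow,
    ENNReal.mul_inv_cancel (by simp; omega)
      (ENNReal.mul_ne_top ENNReal.ofNat_ne_top (ENNReal.natCast_ne_top n)),
    one_pow, mul_one]
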